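/- arXiv:2307.13814 — 4 statements merged into one kernel-verified Lean document; each statement's English description precedes it below -/
import Mathlib

section
/- Let G be a locally compact Hausdorff étale groupoid and suppose γ ∈ Iso(G)° (the interior of the isotropy) satisfies γ^N ∈ G⁽⁰⁾ with N ≥ 1 minimal. Then there exists an open bisection B of Iso(G)° containing γ such that B^N ⊆ G⁽⁰⁾, and the collection {B^k : k ∈ ℤ} forms a cyclic group of order N under set multiplication, with identity B^N. -/
/-- An algebraic groupoid structure on a type `G`: every element has a range `rng g`,
a source `src g`, an inverse `inv g`, and elements `g, h` are composable when
`src g = rng h`, in which case their product is `mul g h`. -/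
structure Grpd (G : Type*) where
  src : G → G
  rng : G → G
  inv : G → G
  mul : G → G → G
  src_src : ∀ g, src (src g) = src g
  rng_src : ∀ g, rng (src g) = src g
  src_rng : ∀ g, src (rng g) = rng g
  rng_rng : ∀ g, rng (rng g) = rng g
  src_inv : ∀ g, src (inv g) = rng g
  rng_inv : ∀ g, rng (inv g) = src g
  src_mul : ∀ g h, src g = rng h → src (mul g h) = src h
  rng_mul : ∀ g h, src g = rng h → rng (mul g h) = rng g
  mul_assoc : ∀ g h k, src g = rng h → src h = rng k →
    mul (mul g h) k = mul g (mul h k)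
  id_mul : ∀ g, mul (rng g) g = g
  mul_id : ∀ g, mul g (src g) = g
  inv_mul : ∀ g, mul (inv g) g = src g
  mul_inv : ∀ g, mul g (inv g) = rng g

namespace Grpd

variable {G : Type*} (gp : Grpd G)

/-- The unit space `G⁽⁰⁾` of the groupoid. -/
def units : Set G := { u | gp.rng u = u ∧ gp.src u = u }

/-- The isotropy `Iso(G) = {γ : r(γ) = s(γ)}`. -/
def iso : Set G := { γ | gp.rng γ = gp.src γ }

/-- The set product `UV = {uv : (u,v) composable}`. -/
def setMul (U V : Set G) : Set G :=
  { x | ∃ u ∈ U, ∃ v ∈ V, gp.src u = gp.rng v ∧ x = gp.mul u v }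

/-- The set inverse `U⁻¹`. -/
def setInv (U : Set G) : Set G := gp.inv '' U

/-- Nonnegative set powers: `B⁰ = r(B)`, `B¹ = B`, `Bⁿ⁺¹ = B·Bⁿ`. -/
def spow (B : Set G) : ℕ → Set G
  | 0 => gp.rng '' B
  | 1 => B
  | (n + 2) => gp.setMul B (spow B (n + 1))

/-- Integer set powers, with `B⁻ᵏ = (B⁻¹)ᵏ`. -/
def zpowS (B : Set G) : ℤ → Set G
  | Int.ofNat n => gp.spow B n
  | Int.negSucc n => gp.spow (gp.setInv B) (n + 1)

/-- Powers of a single element: `γ⁰ = r(γ)`, `γⁿ⁺¹ = γ·γⁿ`. -/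
def epow (γ : G) : ℕ → G
  | 0 => gp.rng γ
  | (n + 1) => gp.mul γ (epow γ n)

/-- `B` is a bisection: the range and source maps are injective on `B`. -/
def IsBisection (B : Set G) : Prop :=
  Set.InjOn gp.rng B ∧ Set.InjOn gp.src B

end Grpd

namespace Grpd

variable {G : Type*} (gp : Grpd G)

-- auxiliary lemmas
variable {b : G}

lemma rng_epow (hb : gp.rng b = gp.src b) : ∀ n, gp.rng (gp.epow b n) = gp.rng b
  | 0 => gp.rng_rng b
  | (n + 1) => by
      have h := rng_epow hb n
      show gp.rng (gp.mul b (gp.epow b n)) = gp.rng b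
      rw [gp.rng_mul b _ (by rw [h, hb])]

lemma src_epow (hb : gp.rng b = gp.src b) : ∀ n, gp.src (gp.epow b n) = gp.rng b
  | 0 => by rw [show gp.epow b 0 = gp.rng b from rfl, gp.src_rng]
  | (n + 1) => by
      have h := src_epow hb n
      show gp.src (gp.mul b (gp.epow b n)) = gp.rng b
      rw [gp.src_mul b _ (by rw [gp.rng_epow hb n, hb]), h]

lemma epow_one (hb : gp.rng b = gp.src b) : gp.epow b 1 = b := by
  show gp.mul b (gp.rng b) = b
  rw [hb, gp.mul_id]

lemma epow_add (hb : gp.rng b = gp.src b) :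
    ∀ m n, gp.epow b (m + n) = gp.mul (gp.epow b m) (gp.epow b n)
  | 0, n => by
      rw [Nat.zero_add]
      show gp.epow b n = gp.mul (gp.rng b) (gp.epow b n)
      rw [← gp.rng_epow hb n, gp.id_mul]
  | (m + 1), n => by
      have ih := epow_add hb m n
      rw [show m + 1 + n = (m + n) + 1 by omega]
      show gp.mul b (gp.epow b (m + n)) =
        gp.mul (gp.mul b (gp.epow b m)) (gp.epow b n)
      rw [ih, gp.mul_assoc b (gp.epow b m) (gp.epow b n)
        (by rw [gp.rng_epow hb m]; exact hb.symm)
        (by rw [gp.src_epow hb m, gp.rng_epow hb n])]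

variable {N : ℕ}

lemma epow_add_mul_N (hb : gp.rng b = gp.src b) (hbN : gp.epow b N = gp.rng b) :
    ∀ q m, gp.epow b (m + q * N) = gp.epow b m
  | 0, m => by simp
  | (q + 1), m => by
      have ih := epow_add_mul_N hb hbN q m
      rw [show m + (q + 1) * N = (m + q * N) + N by ring, gp.epow_add hb, hbN,
        ← gp.src_epow hb (m + q * N), gp.mul_id, ih]

lemma epow_mod (hb : gp.rng b = gp.src b) (hbN : gp.epow b N = gp.rng b) (m : ℕ) :
    gp.epow b m = gp.epow b (m % N) := by
  conv_lhs => rw [← Nat.mod_add_div' m N]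
  rw [gp.epow_add_mul_N hb hbN]

lemma epow_congr (hb : gp.rng b = gp.src b) (hbN : gp.epow b N = gp.rng b) {p q : ℕ}
    (h : p % N = q % N) : gp.epow b p = gp.epow b q := by
  rw [gp.epow_mod hb hbN p, h, ← gp.epow_mod hb hbN q]

lemma inv_eq_epow (hb : gp.rng b = gp.src b) (hN : 1 ≤ N)
    (hbN : gp.epow b N = gp.rng b) : gp.inv b = gp.epow b (N - 1) := by
  have h1 : gp.inv b = gp.mul (gp.inv b) (gp.epow b N) := by
    rw [hbN, ← gp.src_inv b, gp.mul_id]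
  have h2 : gp.epow b N = gp.mul b (gp.epow b (N - 1)) := by
    conv_lhs => rw [show N = (N - 1) + 1 by omega]
    rfl
  rw [h1, h2, ← gp.mul_assoc (gp.inv b) b (gp.epow b (N - 1))
      (by rw [gp.src_inv]) (by rw [gp.rng_epow hb]; exact hb.symm),
    gp.inv_mul, ← hb, ← gp.rng_epow hb (N - 1), gp.id_mul]

lemma epow_inv (hb : gp.rng b = gp.src b) (hN : 1 ≤ N)
    (hbN : gp.epow b N = gp.rng b) :
    ∀ m, gp.epow (gp.inv b) m = gp.epow b ((N - 1) * m % N)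
  | 0 => by
      show gp.rng (gp.inv b) = _
      rw [gp.rng_inv, ← hb]
      simp [Grpd.epow]
  | (m + 1) => by
      have ih := epow_inv hb hN hbN m
      show gp.mul (gp.inv b) (gp.epow (gp.inv b) m) = _
      rw [ih, gp.inv_eq_epow hb hN hbN, ← gp.epow_add hb]
      refine gp.epow_congr hb hbN ?_
      have h1 : (N - 1) + (N - 1) * m % N ≡ (N - 1) + (N - 1) * m [MOD N] :=
        Nat.ModEq.add_left _ (Nat.mod_modEq _ _)
      rw [show (N - 1) * (m + 1) = (N - 1) + (N - 1) * m by ring]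
      exact h1.trans (Nat.mod_mod_of_dvd _ dvd_rfl).symm

lemma epow_cancel (hb : gp.rng b = gp.src b) {j k : ℕ} (hjk : j < k)
    (h : gp.epow b j = gp.epow b k) : gp.epow b (k - j) = gp.rng b := by
  have hXA : gp.mul (gp.epow b (k - j)) (gp.epow b j) = gp.epow b j := by
    rw [← gp.epow_add hb, show k - j + j = k by omega, ← h]
  have hrA : gp.rng (gp.epow b j) = gp.rng b := gp.rng_epow hb j
  have hsA : gp.src (gp.epow b j) = gp.rng b := gp.src_epow hb j
  have hsX : gp.src (gp.epow b (k - j)) = gp.rng b := gp.src_epow hb (k - j)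
  calc gp.epow b (k - j) = gp.mul (gp.epow b (k - j)) (gp.src (gp.epow b (k - j))) :=
        (gp.mul_id _).symm
    _ = gp.mul (gp.epow b (k - j)) (gp.mul (gp.epow b j) (gp.inv (gp.epow b j))) := by
        rw [hsX, ← hrA, gp.mul_inv]
    _ = gp.mul (gp.mul (gp.epow b (k - j)) (gp.epow b j)) (gp.inv (gp.epow b j)) := by
        rw [gp.mul_assoc _ _ _ (by rw [hsX, hrA]) (by rw [gp.rng_inv])]
    _ = gp.mul (gp.epow b j) (gp.inv (gp.epow b j)) := by rw [hXA]
    _ = gp.rng b := by rw [gp.mul_inv, hrA]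

-- set level
variable {B : Set G}

lemma spow_image (hB : B ⊆ gp.iso) (hinj : Set.InjOn gp.rng B) :
    ∀ n, gp.spow B n = (fun c => gp.epow c n) '' B
  | 0 => rfl
  | 1 => by
      show B = _
      ext x
      simp only [Set.mem_image]
      constructor
      · intro hx; exact ⟨x, hx, gp.epow_one (hB hx)⟩
      · rintro ⟨c, hc, rfl⟩; rw [gp.epow_one (hB hc)]; exact hc
  | (n + 2) => by
      have ih := spow_image hB hinj (n + 1)
      show gp.setMul B (gp.spow B (n + 1)) = _
      rw [ih]
      ext x
      constructor
      · rintro ⟨u, hu, v, ⟨c, hc, rfl⟩, hcomp, rfl⟩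
        have hr : gp.rng u = gp.rng c := by
          rw [← gp.rng_epow (hB hc) (n + 1), ← hcomp]; exact hB hu
        have huc : u = c := hinj hu hc hr
        subst huc
        exact ⟨u, hu, rfl⟩
      · rintro ⟨c, hc, rfl⟩
        exact ⟨c, hc, gp.epow c (n + 1), ⟨c, hc, rfl⟩,
          by rw [gp.rng_epow (hB hc) (n + 1)]; exact (hB hc : gp.rng c = gp.src c).symm, rfl⟩

lemma setInv_sub_iso (hB : B ⊆ gp.iso) : gp.setInv B ⊆ gp.iso := by
  rintro _ ⟨c, hc, rfl⟩
  show gp.rng (gp.inv c) = gp.src (gp.inv c)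
  rw [gp.rng_inv, gp.src_inv]
  exact (hB hc : gp.rng c = gp.src c).symm

lemma setInv_inj (hB : B ⊆ gp.iso) (hinj : Set.InjOn gp.rng B) :
    Set.InjOn gp.rng (gp.setInv B) := by
  rintro _ ⟨c, hc, rfl⟩ _ ⟨d, hd, rfl⟩ h
  rw [gp.rng_inv, gp.rng_inv] at h
  have hr : gp.rng c = gp.rng d := by
    rw [(hB hc : gp.rng c = gp.src c), (hB hd : gp.rng d = gp.src d)]; exact h
  rw [hinj hc hd hr]

/-- canonical nonnegative exponent of an integer power, mod `N`. -/
def eN (N : ℕ) : ℤ → ℕ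
  | Int.ofNat n => n % N
  | Int.negSucc n => (N - 1) * (n + 1) % N

lemma zpow_image (hB : B ⊆ gp.iso) (hinj : Set.InjOn gp.rng B) (hN : 1 ≤ N)
    (hBN : ∀ c ∈ B, gp.epow c N = gp.rng c) :
    ∀ k : ℤ, gp.zpowS B k = (fun c => gp.epow c (eN N k)) '' B
  | Int.ofNat n => by
      show gp.spow B n = _
      rw [gp.spow_image hB hinj n]
      exact Set.image_congr fun c hc => gp.epow_mod (hB hc) (hBN c hc) n
  | Int.negSucc n => by
      show gp.spow (gp.setInv B) (n + 1) = _
      rw [gp.spow_image (gp.setInv_sub_iso hB) (gp.setInv_inj hB hinj) (n + 1),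
        Grpd.setInv, Set.image_image]
      exact Set.image_congr fun c hc => gp.epow_inv (hB hc) hN (hBN c hc) (n + 1)

lemma setMul_image (hB : B ⊆ gp.iso) (hinj : Set.InjOn gp.rng B) (p q : ℕ) :
    gp.setMul ((fun c => gp.epow c p) '' B) ((fun c => gp.epow c q) '' B)
      = (fun c => gp.epow c (p + q)) '' B := by
  ext x
  constructor
  · rintro ⟨u, ⟨c, hc, rfl⟩, v, ⟨d, hd, rfl⟩, hcomp, rfl⟩
    have hr : gp.rng c = gp.rng d := by
      rw [← gp.rng_epow (hB hd) q, ← hcomp, gp.src_epow (hB hc) p]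
    have hcd : c = d := hinj hc hd hr
    subst hcd
    exact ⟨c, hc, gp.epow_add (hB hc) p q⟩
  · rintro ⟨c, hc, rfl⟩
    exact ⟨gp.epow c p, ⟨c, hc, rfl⟩, gp.epow c q, ⟨c, hc, rfl⟩,
      by rw [gp.src_epow (hB hc) p, gp.rng_epow (hB hc) q], gp.epow_add (hB hc) p q⟩

lemma eN_mod (hN : 1 ≤ N) : ∀ k : ℤ, ((eN N k : ℕ) : ℤ) % (N : ℤ) = k % N
  | Int.ofNat n => by
      show ((n % N : ℕ) : ℤ) % (N : ℤ) = _
      rw [Int.natCast_mod, Int.emod_emod_of_dvd _ dvd_rfl]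
      rfl
  | Int.negSucc n => by
      show (((N - 1) * (n + 1) % N : ℕ) : ℤ) % (N : ℤ) = _
      rw [Int.natCast_mod, Int.emod_emod_of_dvd _ dvd_rfl]
      have hcast : (((N - 1) * (n + 1) : ℕ) : ℤ) = ((N : ℤ) - 1) * ((n : ℤ) + 1) := by
        push_cast [Nat.cast_sub hN]; ring
      rw [hcast]
      have hmod : ((N : ℤ) - 1) * ((n : ℤ) + 1) ≡ Int.negSucc n [ZMOD (N : ℤ)] := by
        rw [Int.modEq_iff_dvd]
        exact ⟨-((n : ℤ) + 1), by rw [Int.negSucc_eq]; ring⟩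
      exact hmod

lemma natmod_of_int {p q M : ℕ} (h : (p : ℤ) % (M : ℤ) = (q : ℤ) % M) : p % M = q % M := by
  exact_mod_cast h

lemma eN_add (hN : 1 ≤ N) (j k : ℤ) : (eN N j + eN N k) % N = eN N (j + k) % N := by
  apply natmod_of_int
  push_cast
  rw [Int.add_emod, eN_mod hN j, eN_mod hN k, ← Int.add_emod]
  exact (eN_mod hN (j + k)).symm

lemma eN_period (hN : 1 ≤ N) (k : ℤ) : eN N (k + N) % N = eN N k % N := by
  apply natmod_of_int
  rw [eN_mod hN, eN_mod hN, show k + (N : ℤ) = k + (N : ℤ) * 1 by ring,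
    Int.add_mul_emod_self_left]

lemma zpow_mul (hB : B ⊆ gp.iso) (hinj : Set.InjOn gp.rng B) (hN : 1 ≤ N)
    (hBN : ∀ c ∈ B, gp.epow c N = gp.rng c) (j k : ℤ) :
    gp.setMul (gp.zpowS B j) (gp.zpowS B k) = gp.zpowS B (j + k) := by
  rw [gp.zpow_image hB hinj hN hBN j, gp.zpow_image hB hinj hN hBN k,
    gp.zpow_image hB hinj hN hBN (j + k), gp.setMul_image hB hinj]
  exact Set.image_congr fun c hc => gp.epow_congr (hB hc) (hBN c hc) (eN_add hN j k)

lemma zpow_period (hB : B ⊆ gp.iso) (hinj : Set.InjOn gp.rng B) (hN : 1 ≤ N)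
    (hBN : ∀ c ∈ B, gp.epow c N = gp.rng c) (k : ℤ) :
    gp.zpowS B (k + N) = gp.zpowS B k := by
  rw [gp.zpow_image hB hinj hN hBN (k + N), gp.zpow_image hB hinj hN hBN k]
  exact Set.image_congr fun c hc => gp.epow_congr (hB hc) (hBN c hc) (eN_period hN k)

-- topology
variable [TopologicalSpace G]

lemma units_open (hetale : IsLocalHomeomorph gp.rng) : IsOpen gp.units := by
  rw [isOpen_iff_forall_mem_open]
  intro u hu
  obtain ⟨e, hue, hfe⟩ := hetale u
  refine ⟨e.source ∩ gp.rng ⁻¹' e.source, ?_, ?_, ?_⟩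
  · rintro x ⟨hx1, hx2⟩
    have hinj : Set.InjOn gp.rng e.source := by rw [hfe]; exact e.injOn
    have hxx : gp.rng x = x := hinj hx2 hx1 (gp.rng_rng x)
    exact ⟨hxx, by rw [← hxx, gp.src_rng, hxx]⟩
  · exact e.open_source.inter (hetale.continuous.isOpen_preimage _ e.open_source)
  · exact ⟨hue, by rw [Set.mem_preimage, hu.1]; exact hue⟩

lemma epow_cont
    (hmul_cont : Continuous fun q : { q : G × G // gp.src q.1 = gp.rng q.2 } =>
      gp.mul q.1.1 q.1.2)
    (hrng_cont : Continuous gp.rng) {S : Set G} (hS : S ⊆ gp.iso) :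
    ∀ n, Continuous fun x : S => gp.epow x.1 n
  | 0 => hrng_cont.comp continuous_subtype_val
  | (n + 1) => by
      have ih := epow_cont hmul_cont hrng_cont hS n
      have key : Continuous fun x : S =>
          (⟨(x.1, gp.epow x.1 n), by
            rw [gp.rng_epow (hS x.2) n]
            exact (hS x.2 : gp.rng x.1 = gp.src x.1).symm⟩ :
            { q : G × G // gp.src q.1 = gp.rng q.2 }) :=
        Continuous.subtype_mk (continuous_subtype_val.prodMk ih) _
      show Continuous fun x : S => gp.mul x.1 (gp.epow x.1 n)
      exact hmul_cont.comp key

end Grpd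

/-- Lemma 5.3: if `γ ∈ Iso(G)°` satisfies `γ^N ∈ G⁽⁰⁾` with `N ≥ 1` minimal, then there is an
open bisection `B ⊆ Iso(G)°` containing `γ` with `B^N ⊆ G⁽⁰⁾`, and `{Bᵏ : k ∈ ℤ}` is a cyclic
group of order `N` under set multiplication, with identity `B^N = B⁰ = r(B)`. -/
theorem exists_bisection_cyclic_group {G : Type*} [TopologicalSpace G]
    [LocallyCompactSpace G] [T2Space G] (gp : Grpd G)
    (hinv_cont : Continuous gp.inv)
    (hmul_cont : Continuous fun q : { q : G × G // gp.src q.1 = gp.rng q.2 } =>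
      gp.mul q.1.1 q.1.2)
    (hetale : IsLocalHomeomorph gp.rng)
    (γ : G) (hγ : γ ∈ interior gp.iso)
    (N : ℕ) (hN : 1 ≤ N) (hγN : gp.epow γ N ∈ gp.units)
    (hmin : ∀ m : ℕ, 1 ≤ m → m < N → gp.epow γ m ∉ gp.units) :
    ∃ B : Set G, IsOpen B ∧ γ ∈ B ∧ B ⊆ interior gp.iso ∧ gp.IsBisection B ∧
      gp.spow B N ⊆ gp.units ∧
      (∀ j k : ℤ, gp.setMul (gp.zpowS B j) (gp.zpowS B k) = gp.zpowS B (j + k)) ∧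
      (∀ k : ℤ, gp.zpowS B (k + N) = gp.zpowS B k) ∧
      gp.zpowS B N = gp.zpowS B 0 ∧
      Function.Injective (fun k : Fin N => gp.zpowS B k) := by
  have hγiso' : γ ∈ gp.iso := interior_subset hγ
  have hγiso : gp.rng γ = gp.src γ := hγiso'
  have hUopen : IsOpen gp.units := gp.units_open hetale
  obtain ⟨e, hγe, hfe⟩ := hetale γ
  have hSiso : interior gp.iso ⊆ gp.iso := interior_subset
  have hcont : Continuous fun x : interior gp.iso => gp.epow x.1 N :=
    gp.epow_cont hmul_cont hetale.continuous hSiso N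
  have hpre : IsOpen {x : interior gp.iso | gp.epow x.1 N ∈ gp.units} :=
    hUopen.preimage hcont
  set U : Set G :=
    Subtype.val '' {x : interior gp.iso | gp.epow x.1 N ∈ gp.units} with hU
  have hUopen' : IsOpen U := isOpen_interior.isOpenMap_subtype_val _ hpre
  refine ⟨U ∩ e.source, hUopen'.inter e.open_source, ?_, ?_, ?_, ?_, ?_, ?_, ?_, ?_⟩
  case _ => exact ⟨⟨⟨γ, hγ⟩, hγN, rfl⟩, hγe⟩
  all_goals {
    have hBint : U ∩ e.source ⊆ interior gp.iso := by
      rintro x ⟨⟨y, _, rfl⟩, _⟩; exact y.2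
    have hBsub : U ∩ e.source ⊆ gp.iso := hBint.trans hSiso
    have hinj : Set.InjOn gp.rng (U ∩ e.source) := by
      have : Set.InjOn gp.rng e.source := by rw [hfe]; exact e.injOn
      exact this.mono Set.inter_subset_right
    have hBU : ∀ c ∈ U ∩ e.source, gp.epow c N ∈ gp.units := by
      rintro c ⟨⟨y, hy, rfl⟩, _⟩; exact hy
    have hBN : ∀ c ∈ U ∩ e.source, gp.epow c N = gp.rng c := by
      intro c hc
      have h1 := (hBU c hc).1
      rw [gp.rng_epow (hBsub hc) N] at h1
      exact h1.symm
    have hγB : γ ∈ U ∩ e.source := ⟨⟨⟨γ, hγ⟩, hγN, rfl⟩, hγe⟩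
    clear_value U
    first
    | exact hBint
    | exact ⟨hinj, fun x hx y hy h => hinj hx hy (by
        rw [(hBsub hx : gp.rng x = gp.src x), (hBsub hy : gp.rng y = gp.src y)]
        exact h)⟩
    | · rw [gp.spow_image hBsub hinj N]
        rintro _ ⟨c, hc, rfl⟩
        exact hBU c hc
    | exact gp.zpow_mul hBsub hinj hN hBN
    | exact gp.zpow_period hBsub hinj hN hBN
    | · have h0 := gp.zpow_period hBsub hinj hN hBN 0
        rwa [zero_add] at h0
    | · intro j k h
        have him : ∀ m : Fin N,
            gp.zpowS (U ∩ e.source) (m : ℤ) = (fun c => gp.epow c m.val) '' (U ∩ e.source) := by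
          intro m
          rw [gp.zpow_image hBsub hinj hN hBN ((m : ℕ) : ℤ)]
          refine Set.image_congr fun c hc => ?_
          have heq : Grpd.eN N ((m : ℕ) : ℤ) = m.val := by
            show m.val % N = m.val
            exact Nat.mod_eq_of_lt m.isLt
          rw [heq]
        simp only at h
        rw [him j, him k] at h
        have hmem : gp.epow γ j.val ∈ (fun c => gp.epow c k.val) '' (U ∩ e.source) := by
          rw [← h]; exact ⟨γ, hγB, rfl⟩
        obtain ⟨c, hc, hck'⟩ := hmem
        have hck : gp.epow c k.val = gp.epow γ j.val := hck'
        have hrc : gp.rng c = gp.rng γ := by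
          rw [← gp.rng_epow (hBsub hc) k.val, hck, gp.rng_epow hγiso j.val]
        have hcγ : c = γ := hinj hc hγB hrc
        subst hcγ
        have heq : gp.epow c j.val = gp.epow c k.val := hck.symm
        have hru : gp.rng c ∈ gp.units := ⟨gp.rng_rng c, gp.src_rng c⟩
        rcases lt_trichotomy j.val k.val with hlt | heqv | hgt
        · exfalso
          have hcancel := gp.epow_cancel hγiso hlt heq
          exact hmin (k.val - j.val) (by omega) (by omega) (hcancel ▸ hru)
        · exact Fin.ext heqv
        · exfalso
          have hcancel := gp.epow_cancel hγiso hgt heq.symm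
          exact hmin (j.val - k.val) (by omega) (by omega) (hcancel ▸ hru) }
end

section
/- Let G be a groupoid and B an open bisection contained in Iso(G)° ∖ G⁽⁰⁾ such that every element of B has infinite order (no positive power lies in G⁽⁰⁾). Then the sets B^ℓ and B^k are disjoint whenever ℓ ≠ k (ℓ, k ∈ ℤ), and R = ⋃_{k∈ℤ} B^k is a subgroupoid of G with unit space r(B). -/
namespace Grpd

variable {G : Type*} (gp : Grpd G)

lemma epow_rng {σ : G} (hσ : gp.rng σ = gp.src σ) : ∀ n, gp.rng (gp.epow σ n) = gp.rng σ := by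
  intro n
  induction n with
  | zero => exact gp.rng_rng σ
  | succ n ih =>
    show gp.rng (gp.mul σ (gp.epow σ n)) = gp.rng σ
    rw [gp.rng_mul σ _ (by rw [ih]; exact hσ.symm)]

lemma epow_mem_spow {C : Set G} {σ : G} (hσC : σ ∈ C) (hσ : gp.rng σ = gp.src σ) :
    ∀ n, gp.epow σ n ∈ gp.spow C n := by
  intro n
  induction n using Nat.strong_induction_on with
  | _ n ih =>
    match n with
    | 0 => exact ⟨σ, hσC, rfl⟩
    | 1 =>
      show gp.mul σ (gp.rng σ) ∈ C
      rw [hσ, gp.mul_id]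
      exact hσC
    | (n + 2) =>
      exact ⟨σ, hσC, gp.epow σ (n + 1), ih (n + 1) (by omega),
        by rw [gp.epow_rng hσ]; exact hσ.symm, rfl⟩

lemma spow_sub {C : Set G} (hinj : Set.InjOn gp.rng C)
    (hiso : ∀ σ ∈ C, gp.rng σ = gp.src σ) :
    ∀ n, ∀ x ∈ gp.spow C n, ∃ σ ∈ C, x = gp.epow σ n := by
  intro n
  induction n using Nat.strong_induction_on with
  | _ n ih =>
    match n with
    | 0 => rintro x ⟨σ, hσ, rfl⟩; exact ⟨σ, hσ, rfl⟩
    | 1 =>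
      intro x hx
      refine ⟨x, hx, ?_⟩
      show x = gp.mul x (gp.rng x)
      rw [hiso x hx, gp.mul_id]
    | (n + 2) =>
      rintro x ⟨u, hu, v, hv, hcomp, rfl⟩
      obtain ⟨τ, hτ, rfl⟩ := ih (n + 1) (by omega) v hv
      have hru : gp.rng u = gp.rng τ := by
        rw [hiso u hu, hcomp, gp.epow_rng (hiso τ hτ)]
      have huτ : u = τ := hinj hu hτ hru
      subst huτ
      exact ⟨u, hu, rfl⟩

/-- Integer powers of a single element. -/
def izpow (σ : G) : ℤ → G
  | Int.ofNat n => gp.epow σ n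
  | Int.negSucc n => gp.epow (gp.inv σ) (n + 1)

instance isoGroup (u : {v : G // gp.rng v = v ∧ gp.src v = v}) :
    Group {g : G // gp.rng g = u.1 ∧ gp.src g = u.1} where
  one := ⟨u.1, by rw [u.2.1], by rw [u.2.2]⟩
  mul a b := ⟨gp.mul a.1 b.1,
    by rw [gp.rng_mul a.1 b.1 (a.2.2.trans b.2.1.symm)]; exact a.2.1,
    by rw [gp.src_mul a.1 b.1 (a.2.2.trans b.2.1.symm)]; exact b.2.2⟩
  inv a := ⟨gp.inv a.1, by rw [gp.rng_inv]; exact a.2.2, by rw [gp.src_inv]; exact a.2.1⟩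
  mul_assoc a b c := Subtype.ext
    (gp.mul_assoc a.1 b.1 c.1 (a.2.2.trans b.2.1.symm) (b.2.2.trans c.2.1.symm))
  one_mul a := Subtype.ext (by
    show gp.mul u.1 a.1 = a.1
    have h := gp.id_mul a.1
    rw [a.2.1] at h
    exact h)
  mul_one a := Subtype.ext (by
    show gp.mul a.1 u.1 = a.1
    have h := gp.mul_id a.1
    rw [a.2.2] at h
    exact h)
  inv_mul_cancel a := Subtype.ext
    (by show gp.mul (gp.inv a.1) a.1 = u.1; rw [gp.inv_mul, a.2.2])

lemma epow_eq_pow (u : {v : G // gp.rng v = v ∧ gp.src v = v})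
    (x : {g : G // gp.rng g = u.1 ∧ gp.src g = u.1}) (n : ℕ) :
    gp.epow x.1 n = ((x ^ n : {g : G // gp.rng g = u.1 ∧ gp.src g = u.1})).1 := by
  induction n with
  | zero => rw [pow_zero]; exact x.2.1
  | succ n ih =>
    rw [pow_succ']
    show gp.mul x.1 (gp.epow x.1 n) = _
    rw [ih]
    rfl

lemma izpow_eq_zpow (u : {v : G // gp.rng v = v ∧ gp.src v = v})
    (x : {g : G // gp.rng g = u.1 ∧ gp.src g = u.1}) (k : ℤ) :
    gp.izpow x.1 k = ((x ^ k : {g : G // gp.rng g = u.1 ∧ gp.src g = u.1})).1 := by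
  cases k with
  | ofNat n =>
    show gp.epow x.1 n = _
    rw [gp.epow_eq_pow u x n]
    exact (congrArg Subtype.val (zpow_natCast x n)).symm
  | negSucc n =>
    show gp.epow (gp.inv x.1) (n + 1) = _
    rw [zpow_negSucc, ← inv_pow]
    exact gp.epow_eq_pow u x⁻¹ (n + 1)

lemma mem_zpowS_iff {B : Set G} (hinjr : Set.InjOn gp.rng B) (hinjs : Set.InjOn gp.src B)
    (hiso : ∀ σ ∈ B, gp.rng σ = gp.src σ) (k : ℤ) (x : G) :
    x ∈ gp.zpowS B k ↔ ∃ σ ∈ B, x = gp.izpow σ k := by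
  cases k with
  | ofNat n =>
    show x ∈ gp.spow B n ↔ _
    constructor
    · intro h; exact gp.spow_sub hinjr hiso n x h
    · rintro ⟨σ, hσ, rfl⟩; exact gp.epow_mem_spow hσ (hiso σ hσ) n
  | negSucc n =>
    show x ∈ gp.spow (gp.setInv B) (n + 1) ↔ _
    have hinj' : Set.InjOn gp.rng (gp.setInv B) := by
      rintro a ⟨σ, hσ, rfl⟩ b ⟨τ, hτ, rfl⟩ hab
      rw [gp.rng_inv, gp.rng_inv] at hab
      rw [hinjs hσ hτ hab]
    have hiso' : ∀ ρ ∈ gp.setInv B, gp.rng ρ = gp.src ρ := by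
      rintro ρ ⟨σ, hσ, rfl⟩
      rw [gp.rng_inv, gp.src_inv]; exact (hiso σ hσ).symm
    constructor
    · intro h
      obtain ⟨ρ, hρ, rfl⟩ := gp.spow_sub hinj' hiso' (n + 1) x h
      obtain ⟨σ, hσ, rfl⟩ := hρ
      exact ⟨σ, hσ, rfl⟩
    · rintro ⟨σ, hσ, rfl⟩
      exact gp.epow_mem_spow (Set.mem_image_of_mem gp.inv hσ) (hiso' _ ⟨σ, hσ, rfl⟩) (n + 1)

lemma coe_mul (u : {v : G // gp.rng v = v ∧ gp.src v = v})
    (a b : {g : G // gp.rng g = u.1 ∧ gp.src g = u.1}) : (a * b).1 = gp.mul a.1 b.1 := rfl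

lemma coe_inv (u : {v : G // gp.rng v = v ∧ gp.src v = v})
    (a : {g : G // gp.rng g = u.1 ∧ gp.src g = u.1}) : (a⁻¹).1 = gp.inv a.1 := rfl

end Grpd

/-- If `B` is an open bisection contained in `Iso(G)° \ G⁽⁰⁾` all of whose elements have
infinite order, then the integer powers `Bᵏ` are pairwise disjoint, and `R = ⋃ₖ Bᵏ` is a
subgroupoid of `G` with unit space `r(B)`. -/
theorem infinite_order_bisection_powers_disjoint {G : Type*} [TopologicalSpace G]
    (gp : Grpd G) (B : Set G) (hBopen : IsOpen B) (hBbis : gp.IsBisection B)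
    (hBsub : B ⊆ interior gp.iso \ gp.units)
    (hinf : ∀ σ ∈ B, ∀ n : ℕ, 1 ≤ n → gp.epow σ n ∉ gp.units) :
    (∀ ℓ k : ℤ, ℓ ≠ k → gp.zpowS B ℓ ∩ gp.zpowS B k = ∅) ∧
    (∀ x ∈ ⋃ k : ℤ, gp.zpowS B k, gp.inv x ∈ ⋃ k : ℤ, gp.zpowS B k) ∧
    (∀ x ∈ ⋃ k : ℤ, gp.zpowS B k, ∀ y ∈ ⋃ k : ℤ, gp.zpowS B k,
      gp.src x = gp.rng y → gp.mul x y ∈ ⋃ k : ℤ, gp.zpowS B k) ∧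
    (⋃ k : ℤ, gp.zpowS B k) ∩ gp.units = gp.rng '' B := by
  obtain ⟨hinjr, hinjs⟩ := hBbis
  have hiso : ∀ σ ∈ B, gp.rng σ = gp.src σ := fun σ h => (interior_subset (hBsub h).1 : σ ∈ gp.iso)
  have hchar : ∀ (k : ℤ) (x : G), x ∈ gp.zpowS B k ↔ ∃ σ ∈ B, x = gp.izpow σ k :=
    gp.mem_zpowS_iff hinjr hinjs hiso
  have key : ∀ σ ∈ B, ∀ k : ℤ,
      gp.rng (gp.izpow σ k) = gp.rng σ ∧ gp.src (gp.izpow σ k) = gp.rng σ := by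
    intro σ hσ k
    set u : {v : G // gp.rng v = v ∧ gp.src v = v} :=
      ⟨gp.rng σ, gp.rng_rng σ, gp.src_rng σ⟩ with hu
    set x : {g : G // gp.rng g = u.1 ∧ gp.src g = u.1} :=
      ⟨σ, rfl, (hiso σ hσ).symm⟩ with hxdef
    rw [show σ = x.1 from rfl, gp.izpow_eq_zpow u x k]
    exact ⟨(x ^ k).2.1, (x ^ k).2.2⟩
  have hinj2 : ∀ σ ∈ B, ∀ a b : ℤ, gp.izpow σ a = gp.izpow σ b → a = b := by
    intro σ hσ a b hab
    set u : {v : G // gp.rng v = v ∧ gp.src v = v} :=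
      ⟨gp.rng σ, gp.rng_rng σ, gp.src_rng σ⟩ with hu
    set x : {g : G // gp.rng g = u.1 ∧ gp.src g = u.1} :=
      ⟨σ, rfl, (hiso σ hσ).symm⟩ with hxdef
    rw [show σ = x.1 from rfl, gp.izpow_eq_zpow u x a, gp.izpow_eq_zpow u x b] at hab
    have hx : x ^ a = x ^ b := Subtype.ext hab
    have hfin : ¬ IsOfFinOrder x := by
      rw [isOfFinOrder_iff_pow_eq_one]
      rintro ⟨n, hn, h1⟩
      refine hinf σ hσ n hn ?_
      have he : gp.epow σ n = gp.rng σ := by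
        rw [show σ = x.1 from rfl, gp.epow_eq_pow u x n, h1]
        rfl
      rw [he]
      exact ⟨gp.rng_rng σ, gp.src_rng σ⟩
    exact injective_zpow_iff_not_isOfFinOrder.2 hfin hx
  have hinv : ∀ σ ∈ B, ∀ k : ℤ, gp.inv (gp.izpow σ k) = gp.izpow σ (-k) := by
    intro σ hσ k
    set u : {v : G // gp.rng v = v ∧ gp.src v = v} :=
      ⟨gp.rng σ, gp.rng_rng σ, gp.src_rng σ⟩ with hu
    set x : {g : G // gp.rng g = u.1 ∧ gp.src g = u.1} :=
      ⟨σ, rfl, (hiso σ hσ).symm⟩ with hxdef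
    rw [show σ = x.1 from rfl, gp.izpow_eq_zpow u x k, gp.izpow_eq_zpow u x (-k),
      zpow_neg, ← gp.coe_inv u (x ^ k)]
  have hmul : ∀ σ ∈ B, ∀ a b : ℤ,
      gp.mul (gp.izpow σ a) (gp.izpow σ b) = gp.izpow σ (a + b) := by
    intro σ hσ a b
    set u : {v : G // gp.rng v = v ∧ gp.src v = v} :=
      ⟨gp.rng σ, gp.rng_rng σ, gp.src_rng σ⟩ with hu
    set x : {g : G // gp.rng g = u.1 ∧ gp.src g = u.1} :=
      ⟨σ, rfl, (hiso σ hσ).symm⟩ with hxdef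
    rw [show σ = x.1 from rfl, gp.izpow_eq_zpow u x a, gp.izpow_eq_zpow u x b,
      gp.izpow_eq_zpow u x (a + b), zpow_add, ← gp.coe_mul u (x ^ a) (x ^ b)]
  refine ⟨?_, ?_, ?_, ?_⟩
  · intro ℓ k hlk
    rw [Set.eq_empty_iff_forall_notMem]
    rintro x ⟨h1, h2⟩
    obtain ⟨σ, hσ, rfl⟩ := (hchar ℓ x).1 h1
    obtain ⟨τ, hτ, he⟩ := (hchar k _).1 h2
    have hr : gp.rng σ = gp.rng τ := by
      rw [← (key σ hσ ℓ).1, he, (key τ hτ k).1]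
    have hστ : σ = τ := hinjr hσ hτ hr
    subst hστ
    exact hlk (hinj2 σ hσ ℓ k he)
  · intro x hx
    obtain ⟨k, hk⟩ := Set.mem_iUnion.1 hx
    obtain ⟨σ, hσ, rfl⟩ := (hchar k x).1 hk
    exact Set.mem_iUnion.2 ⟨-k, (hchar (-k) _).2 ⟨σ, hσ, hinv σ hσ k⟩⟩
  · intro x hx y hy hxy
    obtain ⟨a, ha⟩ := Set.mem_iUnion.1 hx
    obtain ⟨σ, hσ, rfl⟩ := (hchar a x).1 ha
    obtain ⟨b, hb⟩ := Set.mem_iUnion.1 hy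
    obtain ⟨τ, hτ, rfl⟩ := (hchar b y).1 hb
    have hr : gp.rng σ = gp.rng τ := by
      rw [← (key σ hσ a).2, hxy, (key τ hτ b).1]
    have hστ : σ = τ := hinjr hσ hτ hr
    subst hστ
    exact Set.mem_iUnion.2 ⟨a + b, (hchar (a + b) _).2 ⟨σ, hσ, hmul σ hσ a b⟩⟩
  · ext x
    constructor
    · rintro ⟨hx, hu⟩
      obtain ⟨k, hk⟩ := Set.mem_iUnion.1 hx
      obtain ⟨σ, hσ, rfl⟩ := (hchar k x).1 hk
      refine ⟨σ, hσ, ?_⟩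
      rw [← (key σ hσ k).1]
      exact hu.1
    · rintro ⟨σ, hσ, rfl⟩
      refine ⟨Set.mem_iUnion.2 ⟨0, (hchar 0 _).2 ⟨σ, hσ, rfl⟩⟩,
        gp.rng_rng σ, gp.src_rng σ⟩
end

section
/- In C(𝕋), identify C*(ℤ) via the Fourier transform sending δ₁ to the identity function z ↦ z. The Fourier coefficients of the function m(z) = (z − 2z²)/|z − 2z²| are nonzero at both index 1 and index 2; equivalently, ∫_𝕋 m(z) z̄ dz ≠ 0 and ∫_𝕋 m(z) z̄² dz ≠ 0 (with normalized Haar measure). -/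
/-!
On the circle, `m(e^{iθ}) = (e^{iθ} - 2e^{2iθ}) / √(5 - 4 cos θ)`, so the real parts of the first
and second Fourier coefficients are `∫ (1 - 2 cos θ) / √(5 - 4 cos θ)` and
`∫ (cos θ - 2) / √(5 - 4 cos θ)`. The second integrand is negative. In the first one may add
`cos θ`, which integrates to zero; with `s = √(5 - 4 cos θ) ∈ [1, 3]` the new integrand is
`(s - 1)(3 - s)(s + 2) / (4s) ≥ 0`, and it is positive for `0 < θ < π`.
-/

open intervalIntegral Real

/-- The unimodular function `m(z) = (z - 2z²)/|z - 2z²|`, viewed as a function on `ℂ`. -/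
noncomputable def mFun (z : ℂ) : ℂ :=
  (z - 2 * z ^ 2) / (‖z - 2 * z ^ 2‖ : ℂ)

theorem five_sub_four_mul_cos_pos (θ : ℝ) : 0 < 5 - 4 * Real.cos θ := by
  linarith [Real.cos_le_one θ]

theorem Continuous.div_sqrt_five_sub_four_mul_cos {f : ℝ → ℝ} (hf : Continuous f) :
    Continuous fun θ ↦ f θ / √(5 - 4 * Real.cos θ) :=
  hf.div (by fun_prop) fun θ ↦ (Real.sqrt_pos.2 (five_sub_four_mul_cos_pos θ)).ne'

theorem abs_cos_lt_one_of_mem_Ioo {θ : ℝ} (hθ : θ ∈ Set.Ioo 0 π) : |Real.cos θ| < 1 := by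
  rw [← sq_lt_one_iff_abs_lt_one, ← Real.sin_sq_add_cos_sq θ, lt_add_iff_pos_left]
  exact pow_pos (Real.sin_pos_of_pos_of_lt_pi hθ.1 hθ.2) 2

theorem one_sub_two_mul_div_sqrt_add_eq {c : ℝ} (hc : c < 5 / 4) :
    (1 - 2 * c) / √(5 - 4 * c) + c
      = (√(5 - 4 * c) - 1) * (3 - √(5 - 4 * c)) * (√(5 - 4 * c) + 2) / (4 * √(5 - 4 * c)) := by
  have hs : √(5 - 4 * c) ^ 2 = 5 - 4 * c := Real.sq_sqrt (by linarith)
  have hs0 : √(5 - 4 * c) ≠ 0 := (Real.sqrt_pos.2 (by linarith)).ne'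
  generalize √(5 - 4 * c) = s at hs hs0 ⊢
  field_simp
  linear_combination (s - 2) * hs

theorem one_sub_two_mul_div_sqrt_add_nonneg {c : ℝ} (hc : |c| ≤ 1) :
    0 ≤ (1 - 2 * c) / √(5 - 4 * c) + c := by
  obtain ⟨hc₁, hc₂⟩ := abs_le.1 hc
  rw [one_sub_two_mul_div_sqrt_add_eq (by linarith)]
  have h1 : 0 ≤ √(5 - 4 * c) - 1 := sub_nonneg.2 (Real.le_sqrt_of_sq_le (by linarith))
  have h3 : 0 ≤ 3 - √(5 - 4 * c) := sub_nonneg.2 (Real.sqrt_le_iff.2 ⟨by norm_num, by linarith⟩)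
  positivity

theorem one_sub_two_mul_div_sqrt_add_pos {c : ℝ} (hc : |c| < 1) :
    0 < (1 - 2 * c) / √(5 - 4 * c) + c := by
  obtain ⟨hc₁, hc₂⟩ := abs_lt.1 hc
  rw [one_sub_two_mul_div_sqrt_add_eq (by linarith)]
  have h1 : 0 < √(5 - 4 * c) - 1 := sub_pos.2 (Real.lt_sqrt_of_sq_lt (by linarith))
  have h3 : 0 < 3 - √(5 - 4 * c) := sub_pos.2 ((Real.sqrt_lt' (by norm_num)).2 (by linarith))
  have hs : 0 < √(5 - 4 * c) := Real.sqrt_pos.2 (by linarith)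
  positivity

theorem integral_one_sub_two_mul_cos_div_sqrt_pos :
    0 < ∫ θ in (0 : ℝ)..(2 * π), (1 - 2 * Real.cos θ) / √(5 - 4 * Real.cos θ) := by
  set f : ℝ → ℝ := fun θ ↦ (1 - 2 * Real.cos θ) / √(5 - 4 * Real.cos θ)
  set g : ℝ → ℝ := fun θ ↦ f θ + Real.cos θ
  have hf : Continuous f :=
    (by fun_prop : Continuous fun θ ↦ 1 - 2 * Real.cos θ).div_sqrt_five_sub_four_mul_cos
  have hg : Continuous g := hf.add Real.continuous_cos
  have hf_eq_g : ∫ θ in (0 : ℝ)..(2 * π), f θ = ∫ θ in (0 : ℝ)..(2 * π), g θ := by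
    rw [intervalIntegral.integral_add (hf.intervalIntegrable _ _)
      (Real.continuous_cos.intervalIntegrable _ _), integral_cos]
    simp
  calc 0 < ∫ θ in (0 : ℝ)..π, g θ :=
        intervalIntegral_pos_of_pos_on (hg.intervalIntegrable _ _)
          (fun θ hθ ↦ one_sub_two_mul_div_sqrt_add_pos (abs_cos_lt_one_of_mem_Ioo hθ)) pi_pos
    _ ≤ ∫ θ in (0 : ℝ)..(2 * π), g θ :=
        intervalIntegral.integral_mono_interval le_rfl pi_pos.le (by linarith [pi_pos])
          (MeasureTheory.ae_of_all _ fun θ ↦ one_sub_two_mul_div_sqrt_add_nonneg (abs_cos_le_one θ))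
          (hg.intervalIntegrable _ _)
    _ = _ := hf_eq_g.symm

theorem integral_cos_sub_two_div_sqrt_neg :
    ∫ θ in (0 : ℝ)..(2 * π), (Real.cos θ - 2) / √(5 - 4 * Real.cos θ) < 0 := by
  have hcont : Continuous fun θ ↦ (2 - Real.cos θ) / √(5 - 4 * Real.cos θ) :=
    (by fun_prop : Continuous fun θ ↦ 2 - Real.cos θ).div_sqrt_five_sub_four_mul_cos
  have hpos := intervalIntegral_pos_of_pos_on (hcont.intervalIntegrable 0 (2 * π))
    (fun θ _ ↦ div_pos (by linarith [Real.cos_le_one θ])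
      (Real.sqrt_pos.2 (five_sub_four_mul_cos_pos θ))) (by linarith [pi_pos])
  simp only [← neg_sub (Real.cos _) 2, neg_div, intervalIntegral.integral_neg] at hpos
  linarith

section

open Complex

theorem intervalIntegral_ne_zero_of_re_ne_zero {f : ℝ → ℂ} {a b : ℝ}
    (hf : IntervalIntegrable f MeasureTheory.volume a b) (h : ∫ x in a..b, (f x).re ≠ 0) :
    ∫ x in a..b, f x ≠ 0 := by
  have hre := intervalIntegral_re (𝕜 := ℂ) hf
  simp only [RCLike.re_to_complex] at hre
  rw [hre] at h
  rintro h0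
  simp [h0] at h

theorem norm_one_sub_ofReal_mul_exp_mul_I (r θ : ℝ) :
    ‖1 - r * exp (θ * I)‖ = √(1 - 2 * r * Real.cos θ + r ^ 2) := by
  rw [← Real.sqrt_sq (norm_nonneg _), Complex.sq_norm, Complex.normSq_apply]
  congr 1
  simp only [sub_re, sub_im, one_re, one_im, re_ofReal_mul, im_ofReal_mul,
    exp_ofReal_mul_I_re, exp_ofReal_mul_I_im]
  linear_combination r ^ 2 * Real.sin_sq_add_cos_sq θ

theorem mFun_exp_mul_I (θ : ℝ) :
    mFun (exp (θ * I)) = (exp (θ * I) - 2 * exp (θ * I) ^ 2) / √(5 - 4 * Real.cos θ) := by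
  have hfactor : exp (θ * I) - 2 * exp (θ * I) ^ 2 = exp (θ * I) * (1 - (2 : ℝ) * exp (θ * I)) := by
    push_cast; ring
  rw [mFun, hfactor, norm_mul, norm_exp_ofReal_mul_I, one_mul,
    norm_one_sub_ofReal_mul_exp_mul_I]
  norm_num
  ring_nf

theorem continuous_mFun_exp_mul_I : Continuous fun θ : ℝ ↦ mFun (exp (θ * I)) := by
  simp_rw [mFun_exp_mul_I]
  refine Continuous.div (by fun_prop) (by fun_prop) fun θ ↦ ?_
  exact_mod_cast (Real.sqrt_pos.2 (five_sub_four_mul_cos_pos θ)).ne'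

theorem re_mFun_exp_mul_I_mul_exp_neg (n θ : ℝ) :
    (mFun (exp (θ * I)) * exp (-(n * θ * I))).re
      = (Real.cos ((1 - n) * θ) - 2 * Real.cos ((2 - n) * θ)) / √(5 - 4 * Real.cos θ) := by
  have hexp : (exp (θ * I) - 2 * exp (θ * I) ^ 2) * exp (-(n * θ * I))
      = exp (((1 - n) * θ : ℝ) * I) - (2 : ℝ) * exp (((2 - n) * θ : ℝ) * I) := by
    rw [sub_mul, ← Complex.exp_nat_mul, mul_assoc 2, ← Complex.exp_add, ← Complex.exp_add]
    push_cast; ring_nf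
  rw [mFun_exp_mul_I, div_mul_eq_mul_div, hexp, div_ofReal_re, sub_re, re_ofReal_mul,
    exp_ofReal_mul_I_re, exp_ofReal_mul_I_re]

end

/-- The first and second Fourier coefficients of `m` (with respect to normalized Haar
measure on the circle, parametrized by `z = e^{iθ}`) are both nonzero. -/
theorem mFun_fourier_coefficients_one_two_nonzero :
    (∫ θ in (0 : ℝ)..(2 * π),
        mFun (Complex.exp (θ * Complex.I)) * Complex.exp (-(θ * Complex.I))) ≠ 0 ∧
    (∫ θ in (0 : ℝ)..(2 * π),
        mFun (Complex.exp (θ * Complex.I)) * Complex.exp (-(2 * θ * Complex.I))) ≠ 0 := by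
  have hre₁ (θ : ℝ) : (mFun (Complex.exp (θ * Complex.I)) * Complex.exp (-(θ * Complex.I))).re
      = (1 - 2 * Real.cos θ) / √(5 - 4 * Real.cos θ) := by
    convert re_mFun_exp_mul_I_mul_exp_neg 1 θ using 2 <;> norm_num
  have hre₂ (θ : ℝ) : (mFun (Complex.exp (θ * Complex.I)) * Complex.exp (-(2 * θ * Complex.I))).re
      = (Real.cos θ - 2) / √(5 - 4 * Real.cos θ) := by
    convert re_mFun_exp_mul_I_mul_exp_neg 2 θ using 2 <;> norm_num
  constructor
  · refine intervalIntegral_ne_zero_of_re_ne_zero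
      ((continuous_mFun_exp_mul_I.mul (by fun_prop)).intervalIntegrable _ _) ?_
    simp_rw [hre₁]
    exact integral_one_sub_two_mul_cos_div_sqrt_pos.ne'
  · refine intervalIntegral_ne_zero_of_re_ne_zero
      ((continuous_mFun_exp_mul_I.mul (by fun_prop)).intervalIntegrable _ _) ?_
    simp_rw [hre₂]
    exact integral_cos_sub_two_div_sqrt_neg.ne
end

section
/- Let p be a prime. In the group algebra ℂ[ℤ/pℤ] with convolution and involution, the element n of Lemma (point-mass coefficients ζ^{k²} for odd p, or δ₀ − i·δ₁ for p = 2) satisfies: n/√p is a unitary, i.e., (n/√p) * (n/√p)^* = δ₀ = (n/√p)^* * (n/√p). -/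
set_option linter.unusedSectionVars false

/-- Convolution product on the group algebra `ℂ[ℤ/pℤ]` (functions `ZMod p → ℂ`). -/
noncomputable def conv {p : ℕ} [NeZero p] (f g : ZMod p → ℂ) : ZMod p → ℂ :=
  fun k => ∑ ℓ : ZMod p, f ℓ * g (k - ℓ)

/-- Involution `f^*(k) = conj (f (-k))` on `ℂ[ℤ/pℤ]`. -/
noncomputable def invol {p : ℕ} (f : ZMod p → ℂ) : ZMod p → ℂ :=
  fun k => starRingEnd ℂ (f (-k))

/-- The normaliser from the Lemma: `δ₀ - i δ₁` when `p = 2`, and the Gauss-type element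
`∑ₖ ζ^{k²} δₖ` when `p` is odd. -/
noncomputable def nElt (p : ℕ) (ζ : ℂ) : ZMod p → ℂ :=
  fun k => if p = 2 then (if k = 0 then 1 else -Complex.I) else ζ ^ (k.val ^ 2)

section aux

variable {p : ℕ} [NeZero p]

lemma conv_comm (f g : ZMod p → ℂ) : conv f g = conv g f := by
  funext k
  show ∑ ℓ : ZMod p, f ℓ * g (k - ℓ) = ∑ ℓ : ZMod p, g ℓ * f (k - ℓ)
  rw [← Equiv.sum_comp (Equiv.subLeft k) (fun ℓ => g ℓ * f (k - ℓ))]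
  simp [Equiv.subLeft, mul_comm]

lemma conv_div (f g : ZMod p → ℂ) (c : ℂ) :
    conv (fun k => f k / c) (fun k => g k / c) = fun k => conv f g k / (c * c) := by
  funext k
  show ∑ ℓ : ZMod p, f ℓ / c * (g (k - ℓ) / c) = (∑ ℓ : ZMod p, f ℓ * g (k - ℓ)) / (c * c)
  rw [Finset.sum_div]
  exact Finset.sum_congr rfl fun ℓ _ => by ring

lemma invol_div (f : ZMod p → ℂ) (c : ℂ) :
    invol (fun k => f k / c) = fun k => invol f k / (starRingEnd ℂ c) := by
  funext k; simp [invol]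

variable (ζ : ℂ)

/-- `e a = ζ ^ a.val`. -/
noncomputable def eChar (a : ZMod p) : ℂ := ζ ^ a.val

lemma pow_mod (h : ζ ^ p = 1) (m : ℕ) : ζ ^ m = ζ ^ (m % p) := by
  conv_lhs => rw [← Nat.div_add_mod m p]
  rw [pow_add, pow_mul, h, one_pow, one_mul]

lemma eChar_add (h : ζ ^ p = 1) (a b : ZMod p) :
    eChar ζ (a + b) = eChar ζ a * eChar ζ b := by
  unfold eChar
  rw [← pow_add, pow_mod ζ h (a.val + b.val), ZMod.val_add]

lemma eChar_zero : eChar (p := p) ζ 0 = 1 := by simp [eChar]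

lemma norm_eChar (h : ζ ^ p = 1) (a : ZMod p) : ‖eChar ζ a‖ = 1 := by
  have h1 : ‖ζ‖ = 1 := by
    have hz : ‖ζ‖ ^ p = 1 ^ p := by rw [one_pow, ← norm_pow, h, norm_one]
    exact (pow_left_inj₀ (norm_nonneg ζ) zero_le_one (NeZero.ne p)).mp hz
  simp [eChar, norm_pow, h1]

lemma conj_eChar (h : ζ ^ p = 1) (a : ZMod p) :
    starRingEnd ℂ (eChar ζ a) = eChar ζ (-a) := by
  have h1 : eChar ζ a * eChar ζ (-a) = 1 := by
    rw [← eChar_add ζ h, add_neg_cancel, eChar_zero]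
  rw [← Complex.inv_eq_conj (norm_eChar ζ h a)]
  exact (eq_inv_of_mul_eq_one_right h1).symm

lemma eChar_ne_one (hp : p.Prime) (h : ζ ^ p = 1) (hne : ζ ≠ 1) {c : ZMod p}
    (hc : c ≠ 0) : eChar ζ c ≠ 1 := by
  intro habs
  have hdvd : orderOf ζ ∣ c.val := orderOf_dvd_of_pow_eq_one habs
  have hdvd' : orderOf ζ ∣ p := orderOf_dvd_of_pow_eq_one h
  have hord : orderOf ζ = p := by
    rcases (Nat.Prime.eq_one_or_self_of_dvd hp _ hdvd') with h1 | h1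
    · exact absurd (orderOf_eq_one_iff.mp h1) hne
    · exact h1
  rw [hord] at hdvd
  have hv : c.val = 0 := Nat.eq_zero_of_dvd_of_lt hdvd (ZMod.val_lt c)
  exact hc ((ZMod.val_eq_zero c).mp hv)

lemma sum_eChar (hp : p.Prime) (h : ζ ^ p = 1) (hne : ζ ≠ 1) (c : ZMod p) :
    ∑ ℓ : ZMod p, eChar ζ (c * ℓ) = if c = 0 then (p : ℂ) else 0 := by
  by_cases hc : c = 0
  · simp [hc, eChar_zero]
  · simp only [hc, if_false]
    have key : eChar ζ c * ∑ ℓ : ZMod p, eChar ζ (c * ℓ) = ∑ ℓ : ZMod p, eChar ζ (c * ℓ) := by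
      rw [Finset.mul_sum]
      have : ∀ ℓ : ZMod p, eChar ζ c * eChar ζ (c * ℓ) = eChar ζ (c * (ℓ + 1)) := by
        intro ℓ
        rw [mul_add, mul_one, add_comm (c * ℓ) c, eChar_add ζ h]
      simp_rw [this]
      exact Equiv.sum_comp (Equiv.addRight (1 : ZMod p)) (fun ℓ => eChar ζ (c * ℓ))
    have hne1 : eChar ζ c - 1 ≠ 0 := sub_ne_zero.mpr (eChar_ne_one ζ hp h hne hc)
    have : (eChar ζ c - 1) * ∑ ℓ : ZMod p, eChar ζ (c * ℓ) = 0 := by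
      rw [sub_mul, one_mul, key, sub_self]
    exact (mul_eq_zero.mp this).resolve_left hne1

lemma nElt_eq_eChar (hp2 : p ≠ 2) (h : ζ ^ p = 1) (k : ZMod p) :
    nElt p ζ k = eChar ζ (k * k) := by
  simp only [nElt, hp2, if_false, eChar]
  rw [ZMod.val_mul, ← pow_mod ζ h, sq]

lemma sum_zmod_two (f : ZMod 2 → ℂ) : ∑ i : ZMod 2, f i = f 0 + f 1 :=
  Fin.sum_univ_two f

lemma main_conv (hp : p.Prime) (hζ : Odd p → ζ ^ p = 1 ∧ ζ ≠ 1) :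
    conv (nElt p ζ) (invol (nElt p ζ)) = fun k : ZMod p => if k = 0 then (p : ℂ) else 0 := by
  haveI : Fact p.Prime := ⟨hp⟩
  rcases hp.eq_two_or_odd' with h2 | hodd
  · subst h2
    funext k
    show ∑ ℓ : ZMod 2, nElt 2 ζ ℓ * starRingEnd ℂ (nElt 2 ζ (-(k - ℓ))) = _
    have hk : k = 0 ∨ k = 1 := by
      by_cases hk0 : k = 0
      · exact Or.inl hk0
      · refine Or.inr (ZMod.val_injective 2 ?_)
        have h0 : k.val ≠ 0 := fun hh => hk0 ((ZMod.val_eq_zero k).mp hh)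
        have h1 : k.val < 2 := ZMod.val_lt k
        have : (1 : ZMod 2).val = 1 := rfl
        omega
    rw [sum_zmod_two]
    rcases hk with rfl | rfl <;>
      simp +decide [nElt, Complex.ext_iff] ;  norm_num
  · obtain ⟨h, hne⟩ := hζ hodd
    have hp2 : p ≠ 2 := by rintro rfl; simp [Nat.odd_iff] at hodd
    funext k
    show ∑ ℓ : ZMod p, nElt p ζ ℓ * starRingEnd ℂ (nElt p ζ (-(k - ℓ))) = _
    have step : ∀ ℓ : ZMod p,
        nElt p ζ ℓ * starRingEnd ℂ (nElt p ζ (-(k - ℓ)))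
          = eChar ζ (-(k * k)) * eChar ζ ((2 * k) * ℓ) := by
      intro ℓ
      rw [nElt_eq_eChar ζ hp2 h, nElt_eq_eChar ζ hp2 h, conj_eChar ζ h,
        ← eChar_add ζ h, ← eChar_add ζ h]
      congr 1
      ring
    simp_rw [step]
    rw [← Finset.mul_sum, sum_eChar ζ hp h hne]
    have h2k : (2 * k = 0) ↔ (k = 0) := by
      constructor
      · intro hk
        have h2 : (2 : ZMod p) ≠ 0 := by
          intro habs
          have : ((2 : ℕ) : ZMod p) = 0 := by exact_mod_cast habs
          rw [ZMod.natCast_eq_zero_iff] at this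
          have := (Nat.prime_dvd_prime_iff_eq hp Nat.prime_two).mp this
          exact hp2 this
        have : (2 : ZMod p) * k = 0 := hk
        rcases mul_eq_zero.mp this with h | h
        · exact absurd h h2
        · exact h
      · rintro rfl; ring
    by_cases hk : k = 0
    · simp [hk, eChar_zero]
    · simp [hk, (not_iff_not.mpr h2k).mpr hk]

end aux

theorem nElt_div_sqrt_unitary (p : ℕ) [NeZero p] (hp : p.Prime) (ζ : ℂ)
    (hζ : Odd p → ζ ^ p = 1 ∧ ζ ≠ 1) :
    conv (fun k => nElt p ζ k / (Real.sqrt p : ℂ))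
        (invol fun k => nElt p ζ k / (Real.sqrt p : ℂ))
      = (fun k : ZMod p => if k = 0 then 1 else 0) ∧
    conv (invol fun k => nElt p ζ k / (Real.sqrt p : ℂ))
        (fun k => nElt p ζ k / (Real.sqrt p : ℂ))
      = (fun k : ZMod p => if k = 0 then 1 else 0) := by
  have hsq : ((Real.sqrt p : ℂ)) * ((Real.sqrt p : ℂ)) = (p : ℂ) := by
    rw [← Complex.ofReal_mul, Real.mul_self_sqrt (Nat.cast_nonneg p)]
    norm_num
  have hconj : starRingEnd ℂ ((Real.sqrt p : ℂ)) = (Real.sqrt p : ℂ) := Complex.conj_ofReal _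
  have hpne : (p : ℂ) ≠ 0 := Nat.cast_ne_zero.mpr (NeZero.ne p)
  have key : conv (fun k => nElt p ζ k / (Real.sqrt p : ℂ))
      (invol fun k => nElt p ζ k / (Real.sqrt p : ℂ))
      = (fun k : ZMod p => if k = 0 then 1 else 0) := by
    rw [invol_div, hconj, conv_div, main_conv ζ hp hζ, hsq]
    funext k
    by_cases hk : k = 0 <;> simp [hk, hpne]
  exact ⟨key, by rw [conv_comm]; exact key⟩
end
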